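/- Let u ∈ ℝ^n with ‖u‖_2^2 ≤ 1 + α/√n for constant α ≥ 0, let x_0, x_1, ..., x_n be i.i.d. random indices in [n] with P(x = k) ∝ u_k^2, and let T be the first collision time. Then Σ_{ℓ=0}^∞ P(T ≥ ℓ)·‖u‖_2^{2ℓ} ≤ 1 + 2√n · Σ_{k: k√n ∈ ℕ} (1/√n)·exp(-k²/2)·exp(αk) = O(√n). -/

import Mathlib

/-!
Write `p_k = u_k² / ‖u‖²`. The first `ℓ` samples are distinct with probability at most
`ℓ! e_ℓ(p)`, where `e_ℓ` is the elementary symmetric polynomial. Maclaurin's inequality, whose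
inductive step is Chebyshev's sum inequality, bounds `ℓ! e_ℓ(p)` by its value
`∏_{i<ℓ} (1 - i/n)` at the uniform distribution, and this is at most
`exp(-ℓ(ℓ-1)/2n) ≤ 2 exp(-ℓ²/2n)` for `ℓ ≤ n`. Together with `‖u‖^{2ℓ} ≤ exp(αℓ/√n)`, the
`ℓ`-th term of the series is at most twice the `ℓ`-th term of the Riemann sum; the terms with
`ℓ > n` vanish by the pigeonhole principle.
-/

open MeasureTheory ProbabilityTheory

open Finset
open scoped Nat

section ElementarySymmetric

variable {ι R : Type*}

noncomputable def elemSymm [CommSemiring R] (q : ι → R) (m : ℕ) (s : Finset ι) : R :=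
  ∑ A ∈ s.powersetCard m, ∏ k ∈ A, q k

section CommSemiring

variable [CommSemiring R] (q : ι → R)

@[simp]
lemma elemSymm_zero (s : Finset ι) : elemSymm q 0 s = 1 := by
  simp [elemSymm]

variable [DecidableEq ι]

lemma elemSymm_succ_insert {a : ι} {s : Finset ι} (ha : a ∉ s) (m : ℕ) :
    elemSymm q (m + 1) (insert a s) = elemSymm q (m + 1) s + q a * elemSymm q m s := by
  have hinj : Set.InjOn (insert a) (s.powersetCard m : Set (Finset ι)) := fun B hB C hC hBC => by
    have hBs := (mem_powersetCard.mp hB).1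
    have hCs := (mem_powersetCard.mp hC).1
    rw [← erase_insert (fun h => ha (hBs h)), ← erase_insert (fun h => ha (hCs h))]
    exact congrArg (·.erase a) hBC
  have hdisj : Disjoint (s.powersetCard (m + 1)) ((s.powersetCard m).image (insert a)) := by
    refine disjoint_right.mpr fun A hA hA' => ?_
    obtain ⟨B, -, rfl⟩ := mem_image.mp hA
    exact ha ((mem_powersetCard.mp hA').1 (mem_insert_self a B))
  rw [elemSymm, powersetCard_succ_insert ha, sum_union hdisj, sum_image hinj, elemSymm,
    elemSymm, mul_sum]
  refine congrArg _ (sum_congr rfl fun B hB => ?_)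
  rw [prod_insert fun h => ha ((mem_powersetCard.mp hB).1 h)]

lemma elemSymm_succ_eq_erase {k : ι} {s : Finset ι} (hk : k ∈ s) (m : ℕ) :
    elemSymm q (m + 1) s = elemSymm q (m + 1) (s.erase k) + q k * elemSymm q m (s.erase k) := by
  conv_lhs => rw [← insert_erase hk]
  exact elemSymm_succ_insert q (notMem_erase k s) m

lemma mul_elemSymm_erase {k : ι} {s : Finset ι} (hk : k ∈ s) (m : ℕ) :
    q k * elemSymm q m (s.erase k)
      = ∑ A ∈ s.powersetCard (m + 1) with k ∈ A, ∏ j ∈ A, q j := by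
  rw [elemSymm, mul_sum]
  refine sum_nbij' (insert k) (erase · k) (fun B hB => ?_) (fun A hA => ?_)
    (fun B hB => ?_) (fun A hA => insert_erase (mem_filter.mp hA).2) (fun B hB => ?_)
  all_goals simp only [mem_filter, mem_powersetCard] at *
  · have hkB : k ∉ B := fun h => notMem_erase k s (hB.1 h)
    exact ⟨⟨insert_subset hk (hB.1.trans (erase_subset k s)), by
      rw [card_insert_of_notMem hkB, hB.2]⟩, mem_insert_self k B⟩
  · exact ⟨erase_subset_erase k hA.1.1, by rw [card_erase_of_mem hA.2, hA.1.2]; rfl⟩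
  · exact erase_insert fun h => notMem_erase k s (hB.1 h)
  · rw [prod_insert fun h => notMem_erase k s (hB.1 h)]

lemma sum_mul_elemSymm_erase (s : Finset ι) (m : ℕ) :
    ∑ k ∈ s, q k * elemSymm q m (s.erase k) = (m + 1 : ℕ) * elemSymm q (m + 1) s := by
  rw [sum_congr rfl fun k hk => (mul_elemSymm_erase q hk m).trans (sum_filter _ _), sum_comm,
    elemSymm, mul_sum]
  refine sum_congr rfl fun A hA => ?_
  obtain ⟨hAs, hAc⟩ := mem_powersetCard.mp hA
  rw [← sum_filter, filter_mem_eq_inter, inter_eq_right.mpr hAs, sum_const, hAc, nsmul_eq_mul]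

lemma elemSymm_one (s : Finset ι) : elemSymm q 1 s = ∑ k ∈ s, q k := by
  simpa using (sum_mul_elemSymm_erase q s 0).symm

end CommSemiring

section Maclaurin

variable {q : ι → ℝ}

lemma elemSymm_nonneg (hq : 0 ≤ q) (m : ℕ) (s : Finset ι) : 0 ≤ elemSymm q m s :=
  sum_nonneg fun _ _ => prod_nonneg fun j _ => hq j

variable [Fintype ι] [DecidableEq ι]

lemma monovary_mul_elemSymm_erase (hq : 0 ≤ q) (m : ℕ) :
    Monovary (fun k => q k * elemSymm q m (univ.erase k)) q := by
  intro k l hlt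
  cases m with
  | zero => simpa using hlt.le
  | succ m =>
    have hkl : k ≠ l := fun h => hlt.ne (h ▸ rfl)
    dsimp only
    rw [elemSymm_succ_eq_erase q (mem_erase.mpr ⟨hkl.symm, mem_univ l⟩),
      elemSymm_succ_eq_erase q (mem_erase.mpr ⟨hkl, mem_univ k⟩), erase_right_comm]
    nlinarith [hlt.le, hq k, hq l, elemSymm_nonneg hq (m + 1) ((univ.erase l).erase k),
      elemSymm_nonneg hq m ((univ.erase l).erase k)]

lemma card_mul_succ_mul_elemSymm_le (hq : 0 ≤ q) (m : ℕ) :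
    Fintype.card ι * ((m + 1) * elemSymm q (m + 1) univ)
      ≤ (Fintype.card ι - m) * (∑ k, q k) * elemSymm q m univ := by
  cases m with
  | zero => simp [elemSymm_one]
  | succ m =>
    set W : ι → ℝ := fun k => q k * elemSymm q m (univ.erase k)
    have hsum : ∑ k, W k = (m + 1) * elemSymm q (m + 1) univ := by
      simpa using sum_mul_elemSymm_erase q univ m
    have hnext : ((m + 1 : ℕ) + 1) * elemSymm q (m + 1 + 1) univ
        = (∑ k, q k) * elemSymm q (m + 1) univ - ∑ k, W k * q k := by
      rw [← Nat.cast_succ, ← sum_mul_elemSymm_erase, sum_mul, ← sum_sub_distrib]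
      refine sum_congr rfl fun k _ => ?_
      rw [elemSymm_succ_eq_erase q (mem_univ k) m]
      ring
    have hcheb := (monovary_mul_elemSymm_erase hq m).sum_mul_sum_le_card_mul_sum
    rw [hsum] at hcheb
    rw [hnext]
    push_cast
    nlinarith [hcheb]

theorem factorial_mul_elemSymm_le (hq : 0 ≤ q) {ℓ : ℕ} (hℓ : ℓ ≤ Fintype.card ι) :
    ℓ ! * elemSymm q ℓ univ
      ≤ (∏ i ∈ range ℓ, (1 - i / Fintype.card ι : ℝ)) * (∑ k, q k) ^ ℓ := by
  induction ℓ with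
  | zero => simp
  | succ m ih =>
    have hn : (0 : ℝ) < Fintype.card ι := by exact_mod_cast (Nat.zero_lt_succ m).trans_le hℓ
    have hm : (m : ℝ) + 1 ≤ Fintype.card ι := by exact_mod_cast hℓ
    have hfac : 0 ≤ (1 - m / Fintype.card ι : ℝ) * ∑ k, q k :=
      mul_nonneg (sub_nonneg.mpr (div_le_one_of_le₀ (by linarith) hn.le))
        (sum_nonneg fun k _ => hq k)
    have hstep : (m + 1) * elemSymm q (m + 1) univ
        ≤ (1 - m / Fintype.card ι) * (∑ k, q k) * elemSymm q m univ := by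
      rw [← mul_le_mul_iff_of_pos_left hn]
      calc _ ≤ _ := card_mul_succ_mul_elemSymm_le hq m
        _ = _ := by field_simp
    calc ((m + 1) ! : ℝ) * elemSymm q (m + 1) univ
        = m ! * ((m + 1) * elemSymm q (m + 1) univ) := by push_cast [Nat.factorial_succ]; ring
      _ ≤ m ! * ((1 - m / Fintype.card ι) * (∑ k, q k) * elemSymm q m univ) := by gcongr
      _ = (1 - m / Fintype.card ι) * (∑ k, q k) * (m ! * elemSymm q m univ) := by ring
      _ ≤ (1 - m / Fintype.card ι) * (∑ k, q k)
            * ((∏ i ∈ range m, (1 - i / Fintype.card ι : ℝ)) * (∑ k, q k) ^ m) :=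
        mul_le_mul_of_nonneg_left (ih (by omega)) hfac
      _ = _ := by rw [prod_range_succ, pow_succ]; ring

end Maclaurin

end ElementarySymmetric

section InjectiveSequences

variable {ι : Type*} [Fintype ι] [DecidableEq ι]

lemma card_injective_image_eq {ℓ : ℕ} {A : Finset ι} (hA : #A = ℓ) :
    #{g : Fin ℓ → ι | Function.Injective g ∧ univ.image g = A} = ℓ ! := by
  have hAcard : Fintype.card A = ℓ := by rw [Fintype.card_coe, hA]
  have hequiv : Fintype.card (Fin ℓ ≃ A) = ℓ ! := by
    rw [Fintype.card_equiv (Fintype.equivFinOfCardEq hAcard).symm, Fintype.card_fin]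
  rw [← hequiv, ← card_univ]
  symm
  refine card_bij (fun e _ i => (e i : ι)) (fun e _ => ?_) (fun e₁ _ e₂ _ h => ?_) fun g hg => ?_
  · refine mem_filter.mpr ⟨mem_univ _, fun a b h => e.injective (Subtype.ext h), ?_⟩
    ext k
    simp only [mem_image, mem_univ, true_and]
    exact ⟨by rintro ⟨i, rfl⟩; exact (e i).2, fun hk => ⟨e.symm ⟨k, hk⟩, by simp⟩⟩
  · ext i
    exact congrFun h i
  · obtain ⟨hinj, himage⟩ := (mem_filter.mp hg).2
    have hmem : ∀ i, g i ∈ A := fun i => himage ▸ mem_image_of_mem g (mem_univ i)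
    have hbij : Function.Bijective fun i => (⟨g i, hmem i⟩ : A) := by
      rw [Fintype.bijective_iff_injective_and_card]
      exact ⟨fun a b h => hinj (congrArg Subtype.val h), by rw [hAcard, Fintype.card_fin]⟩
    exact ⟨Equiv.ofBijective _ hbij, mem_univ _, rfl⟩

theorem sum_injective_prod_eq_factorial_mul_elemSymm {R : Type*} [CommSemiring R] (q : ι → R)
    (ℓ : ℕ) :
    ∑ g : Fin ℓ → ι with Function.Injective g, ∏ i, q (g i) = ℓ ! * elemSymm q ℓ univ := by
  have hmaps : ∀ g ∈ ({g | Function.Injective g} : Finset (Fin ℓ → ι)),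
      univ.image g ∈ (univ : Finset ι).powersetCard ℓ := fun g hg =>
    mem_powersetCard.mpr ⟨subset_univ _, by
      rw [card_image_of_injective _ (mem_filter.mp hg).2, card_univ, Fintype.card_fin]⟩
  rw [← sum_fiberwise_of_maps_to hmaps, elemSymm, mul_sum]
  refine sum_congr rfl fun A hA => ?_
  rw [filter_filter, sum_congr rfl fun g hg => ?_, sum_const,
    card_injective_image_eq (mem_powersetCard.mp hA).2, nsmul_eq_mul]
  obtain ⟨hinj, himage⟩ := (mem_filter.mp hg).2
  rw [← himage, prod_image fun a _ b _ h => hinj h]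

end InjectiveSequences

section Collisions

variable {Ω ι : Type*} {N : ℕ}

/-- The event `T ≥ ℓ`, for `T` the first collision time of the sequence `x`. -/
def noCollisionBefore (x : Fin N → Ω → ι) (ℓ : ℕ) : Set Ω :=
  {ω | ∀ i j : Fin N, (j : ℕ) < i → (i : ℕ) < ℓ → x i ω ≠ x j ω}

lemma injective_of_mem_noCollisionBefore {x : Fin N → Ω → ι} {ℓ k : ℕ} {ω : Ω}
    (hω : ω ∈ noCollisionBefore x ℓ) (hkℓ : k ≤ ℓ) (hkN : k ≤ N) :
    Function.Injective fun i : Fin k => x (Fin.castLE hkN i) ω := by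
  intro a b hab
  by_contra hne
  rcases lt_or_gt_of_ne (Fin.val_ne_of_ne hne) with h | h
  · exact hω _ _ h (b.isLt.trans_le hkℓ) hab.symm
  · exact hω _ _ h (a.isLt.trans_le hkℓ) hab

lemma noCollisionBefore_eq_empty [Fintype ι] (x : Fin N → Ω → ι) {ℓ : ℕ}
    (hN : Fintype.card ι < N) (hℓ : Fintype.card ι < ℓ) : noCollisionBefore x ℓ = ∅ :=
  Set.eq_empty_of_forall_notMem fun _ hω => by
    simpa using Fintype.card_le_of_injective _ (injective_of_mem_noCollisionBefore hω hℓ hN)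

variable [MeasurableSpace Ω] {μ : Measure Ω}

lemma ProbabilityTheory.iIndepFun.measure_mem_le_sum_prod {κ : Type*} [Fintype κ]
    [MeasurableSpace ι] [MeasurableSingletonClass ι] {y : κ → Ω → ι} (hy : iIndepFun y μ) (G : Finset (κ → ι)) :
    μ {ω | (fun i => y i ω) ∈ G} ≤ ∑ g ∈ G, ∏ i, μ {ω | y i ω = g i} :=
  calc μ {ω | (fun i => y i ω) ∈ G} ≤ μ (⋃ g ∈ G, ⋂ i, {ω | y i ω = g i}) :=
        measure_mono fun _ hω => Set.mem_iUnion₂.mpr ⟨_, hω, Set.mem_iInter.mpr fun _ => rfl⟩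
    _ ≤ ∑ g ∈ G, μ (⋂ i, {ω | y i ω = g i}) := measure_biUnion_finset_le _ _
    _ = ∑ g ∈ G, ∏ i, μ {ω | y i ω = g i} :=
        sum_congr rfl fun g _ => hy.meas_iInter fun i => ⟨{g i}, measurableSet_singleton _, rfl⟩

theorem measure_noCollisionBefore_le_prod [Fintype ι] [DecidableEq ι] [MeasurableSpace ι]
    [MeasurableSingletonClass ι] {x : Fin N → Ω → ι} (hx : iIndepFun x μ) {p : ι → ℝ}
    (hp : 0 ≤ p) (hp₁ : ∑ k, p k ≤ 1)
    (hdist : ∀ i k, μ {ω | x i ω = k} = ENNReal.ofReal (p k)) {ℓ : ℕ}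
    (hℓ : ℓ ≤ Fintype.card ι) (hℓN : ℓ ≤ N) :
    (μ (noCollisionBefore x ℓ)).toReal ≤ ∏ i ∈ range ℓ, (1 - i / Fintype.card ι : ℝ) := by
  have hsub : noCollisionBefore x ℓ
      ⊆ {ω | (fun i : Fin ℓ => x (Fin.castLE hℓN i) ω) ∈
          ({g | Function.Injective g} : Finset (Fin ℓ → ι))} :=
    fun ω hω => by simpa using injective_of_mem_noCollisionBefore hω le_rfl hℓN
  have hle : μ (noCollisionBefore x ℓ)
      ≤ ENNReal.ofReal (∑ g : Fin ℓ → ι with Function.Injective g, ∏ i, p (g i)) := by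
    refine (measure_mono hsub).trans <|
      ((hx.precomp (Fin.castLE_injective hℓN)).measure_mem_le_sum_prod _).trans_eq ?_
    rw [ENNReal.ofReal_sum_of_nonneg fun g _ => prod_nonneg fun i _ => hp _]
    simp only [ENNReal.ofReal_prod_of_nonneg fun i _ => hp _, hdist]
  have hpow : (∑ k, p k) ^ ℓ ≤ 1 := pow_le_one₀ (sum_nonneg fun k _ => hp k) hp₁
  calc (μ (noCollisionBefore x ℓ)).toReal
      ≤ ∑ g : Fin ℓ → ι with Function.Injective g, ∏ i, p (g i) :=
        ENNReal.toReal_le_of_le_ofReal (sum_nonneg fun g _ => prod_nonneg fun i _ => hp _) hle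
    _ = ℓ ! * elemSymm p ℓ univ := sum_injective_prod_eq_factorial_mul_elemSymm p ℓ
    _ ≤ (∏ i ∈ range ℓ, (1 - i / Fintype.card ι : ℝ)) * (∑ k, p k) ^ ℓ :=
        factorial_mul_elemSymm_le hp hℓ
    _ ≤ ∏ i ∈ range ℓ, (1 - i / Fintype.card ι : ℝ) := by
        refine mul_le_of_le_one_right (prod_nonneg fun i hi => ?_) hpow
        have hi : i ≤ Fintype.card ι := ((mem_range.mp hi).trans_le hℓ).le
        exact sub_nonneg.mpr (div_le_one_of_le₀ (by exact_mod_cast hi) (Nat.cast_nonneg _))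

end Collisions

section Estimates

open Real

lemma prod_range_one_sub_div_le_exp {n ℓ : ℕ} (hℓ : ℓ ≤ n) :
    ∏ i ∈ range ℓ, (1 - i / n : ℝ) ≤ exp (-(ℓ * (ℓ - 1) / (2 * n))) := by
  induction ℓ with
  | zero => simp
  | succ m ih =>
    have hm : (m : ℝ) ≤ n := by exact_mod_cast (Nat.le_succ m).trans hℓ
    rw [prod_range_succ]
    calc _ ≤ exp (-(m * (m - 1) / (2 * n))) * exp (-(m / n)) :=
          mul_le_mul (ih (by omega)) (one_sub_le_exp_neg _)
            (sub_nonneg.mpr (div_le_one_of_le₀ hm (Nat.cast_nonneg _))) (exp_pos _).le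
      _ = _ := by rw [← exp_add]; push_cast; ring_nf

lemma prod_range_one_sub_div_le_two_mul_exp {n ℓ : ℕ} (hn : 0 < n) (hℓ : ℓ ≤ n) :
    ∏ i ∈ range ℓ, (1 - i / n : ℝ) ≤ 2 * exp (-(ℓ / √n) ^ 2 / 2) := by
  have hn' : (0 : ℝ) < n := by exact_mod_cast hn
  have hsplit : -(ℓ * (ℓ - 1) / (2 * n)) = -(ℓ / √n) ^ 2 / 2 + ℓ / (2 * n) := by
    rw [div_pow, sq_sqrt hn'.le]; field_simp; ring
  have hhalf : exp (ℓ / (2 * n)) ≤ 2 := by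
    calc exp (ℓ / (2 * n)) ≤ exp (1 / 2) := by
          rw [exp_le_exp, div_le_div_iff₀ (by positivity) two_pos]
          exact_mod_cast (by omega : ℓ * 2 ≤ 1 * (2 * n))
      _ ≤ 1 / (1 - 1 / 2) := exp_bound_div_one_sub_of_interval (by norm_num) (by norm_num)
      _ = 2 := by norm_num
  calc _ ≤ exp (-(ℓ * (ℓ - 1) / (2 * n))) := prod_range_one_sub_div_le_exp hℓ
    _ = exp (-(ℓ / √n) ^ 2 / 2) * exp (ℓ / (2 * n)) := by rw [hsplit, exp_add]
    _ ≤ 2 * exp (-(ℓ / √n) ^ 2 / 2) := by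
        linarith [mul_le_mul_of_nonneg_left hhalf (exp_pos (-(ℓ / √n) ^ 2 / 2)).le]

lemma pow_le_exp_mul_of_le_one_add {S a : ℝ} (hS₀ : 0 ≤ S) (hS : S ≤ 1 + a) (ℓ : ℕ) :
    S ^ ℓ ≤ exp (ℓ * a) :=
  calc S ^ ℓ ≤ exp a ^ ℓ := pow_le_pow_left₀ hS₀ (hS.trans (by linarith [add_one_le_exp a])) ℓ
    _ = exp (ℓ * a) := (exp_nat_mul a ℓ).symm

lemma summable_exp_neg_sq_div_two_mul_exp (α : ℝ) {s : ℝ} (hs : 0 < s) :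
    Summable fun m : ℕ => exp (-(m / s) ^ 2 / 2) * exp (α * (m / s)) := by
  refine (summable_exp_neg_nat.mul_left (exp ((α + s) ^ 2 / 2))).of_nonneg_of_le
    (fun m => by positivity) fun m => ?_
  rw [← exp_add, ← exp_add, exp_le_exp]
  have hm : (m : ℝ) / s * s = m := div_mul_cancel₀ _ hs.ne'
  nlinarith [sq_nonneg ((m : ℝ) / s - (α + s))]

end Estimates

theorem rank_one_collision_series_bound_general
    {Ω : Type*} [MeasurableSpace Ω] (μ : Measure Ω) [IsProbabilityMeasure μ]
    (n : ℕ) (hn : 0 < n) (α : ℝ)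
    (u : Fin n → ℝ)
    (hnorm : ∑ j, u j ^ 2 ≤ 1 + α / Real.sqrt n)
    (x : Fin (n + 1) → Ω → Fin n)
    (hindep : iIndepFun x μ)
    (hdist : ∀ i k, μ {ω | x i ω = k} = ENNReal.ofReal (u k ^ 2 / ∑ j, u j ^ 2)) :
    (∑' ℓ : ℕ,
        (μ {ω | ∀ i j : Fin (n + 1), (j : ℕ) < (i : ℕ) → (i : ℕ) < ℓ → x i ω ≠ x j ω}).toReal
          * (∑ j, u j ^ 2) ^ ℓ)
      ≤ 1 + 2 * Real.sqrt n *
          ∑' m : ℕ, (1 / Real.sqrt n) * Real.exp (-((m : ℝ) / Real.sqrt n) ^ 2 / 2)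
            * Real.exp (α * ((m : ℝ) / Real.sqrt n)) := by
  open Real in
  set S := ∑ j, u j ^ 2
  set g : ℕ → ℝ := fun m => exp (-(m / √n) ^ 2 / 2) * exp (α * (m / √n))
  have hs : 0 < √(n : ℝ) := sqrt_pos.mpr (by exact_mod_cast hn)
  have hS₀ : 0 ≤ S := sum_nonneg fun j _ => sq_nonneg _
  have hterm (ℓ : ℕ) : (μ (noCollisionBefore x ℓ)).toReal * S ^ ℓ ≤ 2 * g ℓ := by
    rcases le_or_gt ℓ n with hℓ | hℓ
    · have hP := measure_noCollisionBefore_le_prod hindep (p := fun k => u k ^ 2 / S)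
        (fun k => by positivity) (by rw [← sum_div]; exact div_self_le_one S) hdist
        (by simpa using hℓ) (by omega)
      have hpow : S ^ ℓ ≤ exp (α * (ℓ / √n)) :=
        (pow_le_exp_mul_of_le_one_add hS₀ hnorm ℓ).trans_eq (by rw [mul_div_left_comm])
      calc _ ≤ 2 * exp (-(ℓ / √n) ^ 2 / 2) * exp (α * (ℓ / √n)) := by
            refine mul_le_mul (hP.trans ?_) hpow (pow_nonneg hS₀ ℓ) (by positivity)
            simpa using prod_range_one_sub_div_le_two_mul_exp hn hℓ
        _ = 2 * g ℓ := mul_assoc _ _ _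
    · rw [noCollisionBefore_eq_empty x (by simp) (by simpa using hℓ)]
      simp only [measure_empty, ENNReal.toReal_zero, zero_mul]
      positivity
  have hg : Summable g := summable_exp_neg_sq_div_two_mul_exp α hs
  have hrhs : ∑' m : ℕ, (1 / √n) * exp (-(m / √n) ^ 2 / 2) * exp (α * (m / √n))
      = (1 / √n) * ∑' m, g m := by
    rw [← tsum_mul_left]
    exact tsum_congr fun m => mul_assoc _ _ _
  calc _ ≤ ∑' ℓ, 2 * g ℓ :=
        (hg.mul_left 2).of_nonneg_of_le (fun ℓ => by positivity) hterm |>.tsum_le_tsum hterm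
          (hg.mul_left 2)
    _ = 2 * ∑' ℓ, g ℓ := tsum_mul_left
    _ ≤ _ := by
        rw [hrhs, mul_assoc, ← mul_assoc √_, mul_one_div_cancel hs.ne', one_mul]
        linarith

/-- Key estimate for `O(√n)`-spectral independence of the rank-one Ising model at the
critical interaction norm: if `‖u‖₂² ≤ 1 + α/√n`, and `x₀, ..., xₙ` are i.i.d. random
indices in `[n]` with `P(x = k) ∝ u_k²`, `T` the first collision time, then
`Σ_ℓ P(T ≥ ℓ) ‖u‖₂^{2ℓ} ≤ 1 + 2√n Σ_{k√n ∈ ℕ} (1/√n) e^{-k²/2} e^{αk}`. -/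
theorem rank_one_collision_series_bound
    {Ω : Type*} [MeasurableSpace Ω] (μ : Measure Ω) [IsProbabilityMeasure μ]
    (n : ℕ) (hn : 0 < n) (α : ℝ) (hα : 0 ≤ α)
    (u : Fin n → ℝ)
    (hnorm : ∑ j, u j ^ 2 ≤ 1 + α / Real.sqrt n)
    (x : Fin (n + 1) → Ω → Fin n)
    (hmeas : ∀ i, Measurable (x i))
    (hindep : iIndepFun x μ)
    (hdist : ∀ i k, μ {ω | x i ω = k} = ENNReal.ofReal (u k ^ 2 / ∑ j, u j ^ 2)) :
    (∑' ℓ : ℕ,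
        (μ {ω | ∀ i j : Fin (n + 1), (j : ℕ) < (i : ℕ) → (i : ℕ) < ℓ → x i ω ≠ x j ω}).toReal
          * (∑ j, u j ^ 2) ^ ℓ)
      ≤ 1 + 2 * Real.sqrt n *
          ∑' m : ℕ, (1 / Real.sqrt n) * Real.exp (-((m : ℝ) / Real.sqrt n) ^ 2 / 2)
            * Real.exp (α * ((m : ℝ) / Real.sqrt n)) :=
  rank_one_collision_series_bound_general μ n hn α u hnorm x hindep hdist
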